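/- arXiv:1601.01173 — 2 statements merged into one kernel-verified Lean document; each statement's English description precedes it below -/
import Mathlib

section
/- Let A, Ā be K×R matrices of full column rank over a field F, and B, B̄ be N×R matrices of full column rank over F, with A·Bᵀ = Ā·B̄ᵀ. Then the R×R matrix T = Ā⁺·A (where Ā⁺ is a left inverse of Ā) is invertible and satisfies T·Bᵀ = B̄ᵀ. -/
namespace Matrix

variable {m n K : Type*} [Field K] [Fintype m] [DecidableEq m]

theorem isUnit_of_linearIndependent_row_mul {T : Matrix m m K} {M : Matrix m n K}
    (h : LinearIndependent K (T * M).row) : IsUnit T := by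
  rw [← vecMul_injective_iff_isUnit]
  have hcomp : Function.Injective (fun x => x ᵥ* (T * M)) := vecMul_injective_iff.mpr h
  simp only [← vecMul_vecMul] at hcomp
  exact Function.Injective.of_comp (f := (· ᵥ* M)) hcomp

end Matrix

theorem left_inverse_transfer_matrix_invertible_general
    {F : Type*} [Field F] {K R N : ℕ}
    (A Abar : Matrix (Fin K) (Fin R) F) (B Bbar : Matrix (Fin N) (Fin R) F)
    (hBbar : LinearIndependent F Bbar.transpose)
    (Ap : Matrix (Fin R) (Fin K) F) (hAp : Ap * Abar = 1)
    (h : A * B.transpose = Abar * Bbar.transpose) :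
    IsUnit (Ap * A) ∧ (Ap * A) * B.transpose = Bbar.transpose := by
  have htransfer : (Ap * A) * B.transpose = Bbar.transpose := by
    rw [Matrix.mul_assoc, h, ← Matrix.mul_assoc, hAp, Matrix.one_mul]
  refine ⟨Matrix.isUnit_of_linearIndependent_row_mul (M := B.transpose) ?_, htransfer⟩
  rwa [htransfer]

theorem left_inverse_transfer_matrix_invertible
    {F : Type*} [Field F] {K R N : ℕ}
    (A Abar : Matrix (Fin K) (Fin R) F) (B Bbar : Matrix (Fin N) (Fin R) F)
    (hA : LinearIndependent F A.transpose)
    (hAbar : LinearIndependent F Abar.transpose)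
    (hB : LinearIndependent F B.transpose)
    (hBbar : LinearIndependent F Bbar.transpose)
    (Ap : Matrix (Fin R) (Fin K) F) (hAp : Ap * Abar = 1)
    (h : A * B.transpose = Abar * Bbar.transpose) :
    IsUnit (Ap * A) ∧ (Ap * A) * B.transpose = Bbar.transpose :=
  left_inverse_transfer_matrix_invertible_general A Abar B Bbar hBbar Ap hAp h
end

section
/- Let b : ℂ^{2I} → ℂ^{I²} be the polynomial map b(ζ) = (u − i v) ⊗ (u + i v), u = (ζ_1,…,ζ_I), v = (ζ_{I+1},…,ζ_{2I}). Then for every ζ ∈ ℂ^{2I}, the Jacobian matrix J(b, ζ) ∈ ℂ^{I² × 2I} satisfies J(b, ζ)·w = 0 for w = (ζ_{I+1}, …, ζ_{2I}, −ζ_1, …, −ζ_I)ᵀ; hence rank J(b, ζ) ≤ 2I − 1 at every point ζ. -/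
/-- Kronecker product of two vectors. -/
def vecKron {I : ℕ} (u v : Fin I → ℂ) : Fin I × Fin I → ℂ :=
  fun p => u p.1 * v p.2

/-- The polynomial map `b(u, v) = (u - i v) ⊗ (u + i v)`. -/
def sobiumB {I : ℕ} (uv : (Fin I → ℂ) × (Fin I → ℂ)) : Fin I × Fin I → ℂ :=
  vecKron (uv.1 - Complex.I • uv.2) (uv.1 + Complex.I • uv.2)

/-! `b(u, v)` only depends on the product of `u - i v` and `u + i v`, and rotating `(u, v)` by the
angle `t` multiplies these two factors by `e^{it}` and `e^{-it}`. So `b` is constant along the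
rotation orbit of `(u, v)`, whose tangent at `t = 0` is `(v, -u)`, and the chain rule puts this
tangent in the kernel of the Jacobian. It is a nonzero kernel vector unless `(u, v) = 0`, where the
Jacobian of the homogeneous quadratic map `b` vanishes altogether. -/

theorem HasFDerivAt.apply_eq_zero_of_hasDerivAt_comp {𝕜 E F : Type*} [NontriviallyNormedField 𝕜]
    [NormedAddCommGroup E] [NormedSpace 𝕜 E] [NormedAddCommGroup F] [NormedSpace 𝕜 F]
    {f : E → F} {f' : E →L[𝕜] F} {γ : 𝕜 → E} {γ' : E} {t : 𝕜}
    (hf : HasFDerivAt f f' (γ t)) (hγ : HasDerivAt γ γ' t) (h : HasDerivAt (f ∘ γ) 0 t) :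
    f' γ' = 0 :=
  (hf.comp_hasDerivAt t hγ).unique h

theorem LinearMap.rank_le_finrank_sub_one_of_apply_eq_zero {K V W : Type*} [DivisionRing K]
    [AddCommGroup V] [Module K V] [FiniteDimensional K V] [AddCommGroup W] [Module K W]
    (f : V →ₗ[K] W) {w : V} (hw : w ≠ 0) (hfw : f w = 0) :
    f.rank ≤ (Module.finrank K V - 1 : ℕ) := by
  have hker : 0 < Module.finrank K (LinearMap.ker f) :=
    Module.finrank_pos_iff_exists_ne_zero.2 ⟨⟨w, hfw⟩, fun h => hw (congrArg Subtype.val h)⟩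
  have := f.finrank_range_add_finrank_ker
  rw [LinearMap.rank, ← Module.finrank_eq_rank]
  exact_mod_cast (by omega : Module.finrank K (LinearMap.range f) ≤ Module.finrank K V - 1)

theorem sobiumB_apply {I : ℕ} (u v : Fin I → ℂ) (p : Fin I × Fin I) :
    sobiumB (u, v) p = (u p.1 - Complex.I * v p.1) * (u p.2 + Complex.I * v p.2) := rfl

theorem differentiable_sobiumB {I : ℕ} : Differentiable ℂ (sobiumB (I := I)) := by
  rw [differentiable_pi]
  intro p
  simp only [sobiumB, vecKron]
  fun_prop

theorem sobiumB_smul {I : ℕ} (t : ℂ) (x : (Fin I → ℂ) × (Fin I → ℂ)) :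
    sobiumB (t • x) = t ^ 2 • sobiumB x := by
  funext p
  simp only [sobiumB, vecKron, Prod.smul_fst, Prod.smul_snd, Pi.smul_apply, Pi.sub_apply,
    Pi.add_apply, smul_eq_mul]
  ring

theorem sobiumB_rotate {I : ℕ} (t : ℂ) (u v : Fin I → ℂ) :
    sobiumB (Complex.cos t • u + Complex.sin t • v, -Complex.sin t • u + Complex.cos t • v)
      = sobiumB (u, v) := by
  funext p
  simp only [sobiumB_apply, Pi.add_apply, Pi.smul_apply, smul_eq_mul, neg_mul]
  linear_combination
    (u p.1 - Complex.I * v p.1) * (u p.2 + Complex.I * v p.2) * Complex.sin_sq_add_cos_sq t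
    + (Complex.cos t * Complex.sin t * (u p.1 * v p.2 + v p.1 * u p.2)
      - Complex.sin t ^ 2 * (u p.1 * u p.2 - v p.1 * v p.2)) * Complex.I_sq

theorem fderiv_sobiumB_zero {I : ℕ} : fderiv ℂ (sobiumB (I := I)) 0 = 0 := by
  refine ContinuousLinearMap.ext fun e => ?_
  have hline : HasDerivAt (fun t : ℂ => t • e) e 0 := by
    simpa using (hasDerivAt_id (0 : ℂ)).smul_const e
  have hquad : HasDerivAt (sobiumB ∘ fun t : ℂ => t • e) 0 0 := by
    simp only [Function.comp_def, sobiumB_smul]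
    simpa using (hasDerivAt_pow 2 (0 : ℂ)).smul_const (sobiumB e)
  simpa using (differentiable_sobiumB _).hasFDerivAt.apply_eq_zero_of_hasDerivAt_comp hline hquad

theorem fderiv_sobiumB_apply_rotation_tangent {I : ℕ} (u v : Fin I → ℂ) :
    fderiv ℂ sobiumB (u, v) (v, -u) = 0 := by
  let γ : ℂ → (Fin I → ℂ) × (Fin I → ℂ) := fun t =>
    (Complex.cos t • u + Complex.sin t • v, -Complex.sin t • u + Complex.cos t • v)
  have hγ : HasDerivAt γ (v, -u) 0 := by
    have hc := Complex.hasDerivAt_cos 0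
    have hs := Complex.hasDerivAt_sin 0
    simpa [γ] using ((hc.smul_const u).add (hs.smul_const v)).prodMk
      ((hs.neg.smul_const u).add (hc.smul_const v))
  have hconst : HasDerivAt (sobiumB ∘ γ) 0 0 := by
    simp only [Function.comp_def, γ, sobiumB_rotate]
    exact hasDerivAt_const _ _
  simpa [γ] using (differentiable_sobiumB _).hasFDerivAt.apply_eq_zero_of_hasDerivAt_comp hγ hconst

theorem sobiumB_jacobian_kernel_general (I : ℕ) (u v : Fin I → ℂ) :
    fderiv ℂ sobiumB (u, v) (v, -u) = 0 ∧
    LinearMap.rank (fderiv ℂ sobiumB (u, v)).toLinearMap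
      ≤ ((2 * I - 1 : ℕ) : Cardinal) := by
  have hfinrank : Module.finrank ℂ ((Fin I → ℂ) × (Fin I → ℂ)) = 2 * I := by
    rw [Module.finrank_prod, Module.finrank_fin_fun]; ring
  refine ⟨fderiv_sobiumB_apply_rotation_tangent u v, ?_⟩
  by_cases hw : ((v, -u) : (Fin I → ℂ) × (Fin I → ℂ)) = 0
  · obtain ⟨hv, hu⟩ : v = 0 ∧ u = 0 := by simpa using hw
    subst hu hv
    simp [← Prod.zero_eq_mk, fderiv_sobiumB_zero]
  · rw [← hfinrank]
    exact LinearMap.rank_le_finrank_sub_one_of_apply_eq_zero _ hw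
      (fderiv_sobiumB_apply_rotation_tangent u v)

theorem sobiumB_jacobian_kernel (I : ℕ) (hI : 0 < I) (u v : Fin I → ℂ) :
    fderiv ℂ sobiumB (u, v) (v, -u) = 0 ∧
    LinearMap.rank (fderiv ℂ sobiumB (u, v)).toLinearMap
      ≤ ((2 * I - 1 : ℕ) : Cardinal) :=
  sobiumB_jacobian_kernel_general I u v
end
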